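/- arXiv:1903.00062 — 4 statements merged into one kernel-verified Lean document; each statement's English description precedes it below -/
import Mathlib

section
/- For any real numbers C > 1 and 0 < δ < 1/C, any n ∈ ℕ, and any complex numbers x₁,…,xₙ, y₁,…,yₙ satisfying 1/C ≤ |xⱼ| ≤ C and |yⱼ − xⱼ| ≤ δ for each j, and for any choice of an n-th root of y₁⋯yₙ, there exists an n-th root of x₁⋯xₙ such that the distance between the two roots is at most C²δ. -/
open Complex Finset

/-- Algebraic reformulation of `|exp w - 1| ≤ ε`. -/
lemma absLemma_root_avg (w : ℂ) (ε : ℝ) (hε : 0 ≤ ε) :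
    ‖Complex.exp w - 1‖ ≤ ε ↔
      Real.exp w.re + (1 - ε ^ 2) * Real.exp (-w.re) ≤ 2 * Real.cos w.im := by
  have hA : 0 < Real.exp w.re := Real.exp_pos _
  have hB : 0 < Real.exp (-w.re) := Real.exp_pos _
  have hinv : Real.exp w.re * Real.exp (-w.re) = 1 := by
    rw [← Real.exp_add]; simp
  have hsq : (‖Complex.exp w - 1‖) ^ 2
      = Real.exp w.re ^ 2 - 2 * Real.exp w.re * Real.cos w.im + 1 := by
    rw [Complex.sq_norm, Complex.normSq_apply]
    simp only [Complex.sub_re, Complex.sub_im, Complex.exp_re, Complex.exp_im,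
      Complex.one_re, Complex.one_im]
    nlinarith [Real.sin_sq_add_cos_sq w.im]
  have hiff : ‖Complex.exp w - 1‖ ≤ ε ↔
      (‖Complex.exp w - 1‖) ^ 2 ≤ ε ^ 2 := by
    constructor
    · intro h; nlinarith [norm_nonneg (Complex.exp w - 1)]
    · intro h; nlinarith [norm_nonneg (Complex.exp w - 1)]
  rw [hiff, hsq]
  constructor
  · intro h
    nlinarith [mul_le_mul_of_nonneg_right h hA.le]
  · intro h
    nlinarith [mul_le_mul_of_nonneg_right h hB.le]

theorem root_average_estimate (C δ : ℝ) (hC : 1 < C) (hδ0 : 0 < δ) (hδ : δ < 1 / C)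
    (n : ℕ) (hn : 0 < n) (x y : Fin n → ℂ)
    (hx : ∀ j, 1 / C ≤ ‖x j‖ ∧ ‖x j‖ ≤ C)
    (hy : ∀ j, ‖y j - x j‖ ≤ δ)
    (wy : ℂ) (hwy : wy ^ n = ∏ j, y j) :
    ∃ wx : ℂ, wx ^ n = ∏ j, x j ∧ ‖wy - wx‖ ≤ C ^ 2 * δ := by
  have hC0 : (0:ℝ) < C := lt_trans one_pos hC
  set ε : ℝ := C * δ with hεdef
  have hε0 : 0 < ε := mul_pos hC0 hδ0
  have hε1 : ε < 1 := by
    have h := (mul_lt_mul_iff_right₀ hC0).mpr hδ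
    rw [mul_one_div, div_self hC0.ne'] at h
    exact h
  have hn0 : (0:ℝ) < (n : ℝ) := Nat.cast_pos.mpr hn
  have hxa : ∀ j, 0 < ‖x j‖ := by
    intro j
    have h1 := (hx j).1
    have : (0:ℝ) < 1 / C := by positivity
    linarith
  have hx0 : ∀ j, x j ≠ 0 := fun j => by
    simpa using (hxa j).ne'
  have hy0 : ∀ j, y j ≠ 0 := by
    intro j hj
    have h2 := hy j
    rw [hj] at h2
    simp only [zero_sub, norm_neg] at h2
    have := (hx j).1
    linarith
  set r : Fin n → ℂ := fun j => y j / x j with hrdef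
  have hr : ∀ j, ‖r j - 1‖ ≤ ε := by
    intro j
    have hrj : r j - 1 = (y j - x j) / x j := by
      simp only [hrdef]
      rw [div_sub_one (hx0 j)]
    rw [hrj, norm_div, div_le_iff₀ (hxa j)]
    calc ‖y j - x j‖ ≤ δ := hy j
      _ = ε * (1 / C) := by
          rw [hεdef, mul_one_div, mul_comm C δ, mul_div_assoc, div_self hC0.ne', mul_one]
      _ ≤ ε * ‖x j‖ := by
          exact mul_le_mul_of_nonneg_left (hx j).1 hε0.le
  have hrre : ∀ j, 0 < (r j).re := by
    intro j
    have h2 : |(r j - 1).re| ≤ ε := le_trans (Complex.abs_re_le_norm _) (hr j)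
    have h3 : (r j - 1).re = (r j).re - 1 := by simp
    rw [h3] at h2
    have h4 := (abs_le.mp h2).1
    linarith
  have hr0 : ∀ j, r j ≠ 0 := by
    intro j hj
    have := hrre j
    rw [hj] at this
    simp at this
  set w : Fin n → ℂ := fun j => Complex.log (r j) with hwdef
  have hexpw : ∀ j, Complex.exp (w j) = r j := fun j => Complex.exp_log (hr0 j)
  have hineq : ∀ j, Real.exp (w j).re + (1 - ε ^ 2) * Real.exp (-(w j).re)
      ≤ 2 * Real.cos (w j).im := by
    intro j
    exact (absLemma_root_avg (w j) ε hε0.le).mp (by rw [hexpw j]; exact hr j)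
  have him : ∀ j, (w j).im ∈ Set.Icc (-(Real.pi / 2)) (Real.pi / 2) := by
    intro j
    have h1 : |Complex.arg (r j)| < Real.pi / 2 :=
      Complex.abs_arg_lt_pi_div_two_iff.mpr (Or.inl (hrre j))
    have h2 := abs_le.mp h1.le
    have h3 : (w j).im = Complex.arg (r j) := Complex.log_im _
    rw [h3]
    exact ⟨h2.1, h2.2⟩
  set S : ℂ := (((n:ℝ)⁻¹ : ℝ) : ℂ) * ∑ j, w j with hSdef
  -- real and imaginary parts of S
  have hSre : S.re = ∑ j, (n:ℝ)⁻¹ * (w j).re := by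
    rw [hSdef, Complex.re_ofReal_mul, Complex.re_sum, Finset.mul_sum]
  have hSim : S.im = ∑ j, (n:ℝ)⁻¹ * (w j).im := by
    rw [hSdef, Complex.im_ofReal_mul, Complex.im_sum, Finset.mul_sum]
  have hw1 : ∑ _j : Fin n, (n:ℝ)⁻¹ = 1 := by
    simp [Finset.card_univ]
    field_simp
  have hwpos : ∀ j ∈ (Finset.univ : Finset (Fin n)), (0:ℝ) ≤ (n:ℝ)⁻¹ :=
    fun _ _ => by positivity
  -- Jensen for exp at re parts
  have hJ1 : Real.exp S.re ≤ ∑ j, (n:ℝ)⁻¹ * Real.exp ((w j).re) := by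
    have := convexOn_exp.map_sum_le (p := fun j => (w j).re) hwpos hw1
      (fun _ _ => Set.mem_univ _)
    simpa [smul_eq_mul, hSre] using this
  have hJ2 : Real.exp (-S.re) ≤ ∑ j, (n:ℝ)⁻¹ * Real.exp (-(w j).re) := by
    have := convexOn_exp.map_sum_le (p := fun j => -(w j).re) hwpos hw1
      (fun _ _ => Set.mem_univ _)
    have hneg : ∑ j, (n:ℝ)⁻¹ • (-(w j).re) = -S.re := by
      rw [hSre, ← Finset.sum_neg_distrib]
      apply Finset.sum_congr rfl
      intro j _
      simp [smul_eq_mul]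
    rw [hneg] at this
    simpa [smul_eq_mul] using this
  -- Jensen for cos at im parts
  have hJ3 : ∑ j, (n:ℝ)⁻¹ * Real.cos ((w j).im) ≤ Real.cos S.im := by
    have := (strictConcaveOn_cos_Icc.concaveOn).le_map_sum (p := fun j => (w j).im)
      hwpos hw1 (fun j _ => him j)
    simpa [smul_eq_mul, hSim] using this
  have hKnn : (0:ℝ) ≤ 1 - ε ^ 2 := by nlinarith
  have key : Real.exp S.re + (1 - ε ^ 2) * Real.exp (-S.re) ≤ 2 * Real.cos S.im := by
    have h1 : Real.exp S.re + (1 - ε ^ 2) * Real.exp (-S.re)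
        ≤ ∑ j, (n:ℝ)⁻¹ * (Real.exp ((w j).re) + (1 - ε ^ 2) * Real.exp (-(w j).re)) := by
      have h2 := mul_le_mul_of_nonneg_left hJ2 hKnn
      calc Real.exp S.re + (1 - ε ^ 2) * Real.exp (-S.re)
          ≤ (∑ j, (n:ℝ)⁻¹ * Real.exp ((w j).re))
            + (1 - ε ^ 2) * ∑ j, (n:ℝ)⁻¹ * Real.exp (-(w j).re) := by linarith
        _ = ∑ j, (n:ℝ)⁻¹ * (Real.exp ((w j).re) + (1 - ε ^ 2) * Real.exp (-(w j).re)) := by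
            rw [Finset.mul_sum, ← Finset.sum_add_distrib]
            apply Finset.sum_congr rfl
            intro j _
            ring
    have h3 : ∑ j, (n:ℝ)⁻¹ * (Real.exp ((w j).re) + (1 - ε ^ 2) * Real.exp (-(w j).re))
        ≤ ∑ j, (n:ℝ)⁻¹ * (2 * Real.cos ((w j).im)) := by
      apply Finset.sum_le_sum
      intro j _
      exact mul_le_mul_of_nonneg_left (hineq j) (by positivity)
    have h4 : ∑ j, (n:ℝ)⁻¹ * (2 * Real.cos ((w j).im)) = 2 * ∑ j, (n:ℝ)⁻¹ * Real.cos ((w j).im) := by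
      rw [Finset.mul_sum]
      apply Finset.sum_congr rfl
      intro j _
      ring
    calc Real.exp S.re + (1 - ε ^ 2) * Real.exp (-S.re)
        ≤ ∑ j, (n:ℝ)⁻¹ * (Real.exp ((w j).re) + (1 - ε ^ 2) * Real.exp (-(w j).re)) := h1
      _ ≤ ∑ j, (n:ℝ)⁻¹ * (2 * Real.cos ((w j).im)) := h3
      _ = 2 * ∑ j, (n:ℝ)⁻¹ * Real.cos ((w j).im) := h4
      _ ≤ 2 * Real.cos S.im := by linarith [hJ3]
  have hvbound : ‖Complex.exp S - 1‖ ≤ ε :=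
    (absLemma_root_avg S ε hε0.le).mpr key
  -- the chosen root
  refine ⟨wy * Complex.exp (-S), ?_, ?_⟩
  · -- wx ^ n = ∏ x
    have hnS : (n : ℂ) * S = ∑ j, w j := by
      rw [hSdef, ← mul_assoc]
      have : (n : ℂ) * (((n:ℝ)⁻¹ : ℝ) : ℂ) = 1 := by
        have hnc : (n:ℂ) ≠ 0 := Nat.cast_ne_zero.mpr hn.ne'
        push_cast
        exact mul_inv_cancel₀ hnc
      rw [this, one_mul]
    have hvn : Complex.exp S ^ n = ∏ j, r j := by
      rw [← Complex.exp_nat_mul, hnS, Complex.exp_sum]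
      exact Finset.prod_congr rfl fun j _ => hexpw j
    have hprodr : ∏ j, r j = (∏ j, y j) / (∏ j, x j) := by
      rw [hrdef, Finset.prod_div_distrib]
    have hpx : (∏ j, x j) ≠ 0 := Finset.prod_ne_zero_iff.mpr fun j _ => hx0 j
    have hpy : (∏ j, y j) ≠ 0 := Finset.prod_ne_zero_iff.mpr fun j _ => hy0 j
    have hexpS0 : Complex.exp S ≠ 0 := Complex.exp_ne_zero _
    rw [mul_pow, hwy]
    have hnegpow : Complex.exp (-S) ^ n = (Complex.exp S ^ n)⁻¹ := by
      rw [← Complex.exp_nat_mul, ← Complex.exp_nat_mul, mul_neg, Complex.exp_neg]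
    rw [hnegpow, hvn, hprodr]
    field_simp
  · -- distance bound
    have hwxC : ‖wy * Complex.exp (-S)‖ ≤ C := by
      apply le_of_pow_le_pow_left₀ hn.ne' hC0.le
      rw [← norm_pow]
      have hwxn : (wy * Complex.exp (-S)) ^ n = ∏ j, x j := by
        -- redo the computation (same as above)
        have hnS : (n : ℂ) * S = ∑ j, w j := by
          rw [hSdef, ← mul_assoc]
          have : (n : ℂ) * (((n:ℝ)⁻¹ : ℝ) : ℂ) = 1 := by
            have hnc : (n:ℂ) ≠ 0 := Nat.cast_ne_zero.mpr hn.ne'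
            push_cast
            exact mul_inv_cancel₀ hnc
          rw [this, one_mul]
        have hvn : Complex.exp S ^ n = ∏ j, r j := by
          rw [← Complex.exp_nat_mul, hnS, Complex.exp_sum]
          exact Finset.prod_congr rfl fun j _ => hexpw j
        have hprodr : ∏ j, r j = (∏ j, y j) / (∏ j, x j) := by
          rw [hrdef, Finset.prod_div_distrib]
        have hpx : (∏ j, x j) ≠ 0 := Finset.prod_ne_zero_iff.mpr fun j _ => hx0 j
        have hpy : (∏ j, y j) ≠ 0 := Finset.prod_ne_zero_iff.mpr fun j _ => hy0 j
        rw [mul_pow, hwy]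
        have hnegpow : Complex.exp (-S) ^ n = (Complex.exp S ^ n)⁻¹ := by
          rw [← Complex.exp_nat_mul, ← Complex.exp_nat_mul, mul_neg, Complex.exp_neg]
        rw [hnegpow, hvn, hprodr]
        field_simp
      rw [hwxn, norm_prod]
      calc ∏ j, ‖x j‖ ≤ ∏ _j : Fin n, C :=
            Finset.prod_le_prod (fun j _ => (norm_nonneg _)) (fun j _ => (hx j).2)
        _ = C ^ n := by simp
    have hdiff : wy - wy * Complex.exp (-S)
        = (wy * Complex.exp (-S)) * (Complex.exp S - 1) := by
      have h1 : Complex.exp (-S) * Complex.exp S = 1 := by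
        rw [← Complex.exp_add]
        simp
      calc wy - wy * Complex.exp (-S)
          = wy * (Complex.exp (-S) * Complex.exp S) - wy * Complex.exp (-S) := by
            rw [h1, mul_one]
        _ = (wy * Complex.exp (-S)) * (Complex.exp S - 1) := by ring
    rw [hdiff, norm_mul]
    calc ‖wy * Complex.exp (-S)‖ * ‖Complex.exp S - 1‖
        ≤ C * ε := mul_le_mul hwxC hvbound (norm_nonneg _) hC0.le
      _ = C ^ 2 * δ := by rw [hεdef]; ring
end

section
/- Let n ∈ ℕ and let v, u ∈ {0,1}ⁿ be two distinct finite binary sequences of length n that differ only in the last (n-th) digit. Let ⟨v⟩, ⟨u⟩ ∈ {0,1}^ℕ denote the infinite periodic sequences obtained by repeating v and u respectively. Then at least one of ⟨v⟩ and ⟨u⟩ has minimal period exactly n. -/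
/-!
Write `f = ⟨v⟩`, `g = ⟨u⟩` and `p = n - 1`. Since `v` and `u` differ only in the last letter, `f` and
`g` agree off the residue class of `p` mod `n`, so it suffices to show `f p = g p`. If `f` has a
period `0 < m < n` and `g` a period `0 < m' < n`, walk from `p` to `p + m + m'` along the two
periods: `f p = f (p + m) = g (p + m) = g (p + m + m') = f (p + m + m') = f (p + m') = g (p + m') = g p`,
where the middle equality is available because `m + m' ≠ n`; when `m + m' = n`, the `n`-periodicity
of `f` closes the shorter loop `f p = f (p + m' + m) = f (p + m') = g (p + m') = g p`.
-/

/-- the infinite periodic sequence obtained by repeating a word `v` of length `n > 0` -/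
def repeatWord {n : ℕ} (hn : 0 < n) (v : Fin n → Bool) : ℕ → Bool :=
  fun k => v ⟨k % n, Nat.mod_lt k hn⟩

open Function

theorem Nat.not_dvd_add_of_pos_of_lt {a b n : ℕ} (ha : 0 < a) (hb : 0 < b) (han : a < n)
    (hbn : b < n) (hab : a + b ≠ n) : ¬ n ∣ a + b := by
  rcases lt_or_gt_of_ne hab with hlt | hgt
  · exact Nat.not_dvd_of_pos_of_lt (by omega) hlt
  · have hsplit : a + b = n + (a + b - n) := by omega
    rw [hsplit, Nat.dvd_add_self_left]
    exact Nat.not_dvd_of_pos_of_lt (by omega) (by omega)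

theorem Function.Periodic.eq_of_eq_off_modEq {α : Type*} {f g : ℕ → α} {n m m' p : ℕ}
    (hfn : Periodic f n) (hfm : Periodic f m) (hgm' : Periodic g m')
    (hfg : ∀ k, ¬ k ≡ p [MOD n] → f k = g k)
    (hm : 0 < m) (hmn : m < n) (hm' : 0 < m') (hm'n : m' < n) : f p = g p := by
  have hshift : ∀ j, ¬ n ∣ j → f (p + j) = g (p + j) := fun j hj =>
    hfg _ (Nat.add_modEq_left_iff.not.mpr hj)
  have hfgm : f (p + m) = g (p + m) := hshift m (Nat.not_dvd_of_pos_of_lt hm hmn)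
  have hfgm' : f (p + m') = g (p + m') := hshift m' (Nat.not_dvd_of_pos_of_lt hm' hm'n)
  by_cases hsum : m + m' = n
  · calc f p = f (p + m' + m) := by rw [add_assoc, add_comm m' m, hsum, hfn]
      _ = g p := by rw [hfm, hfgm', hgm']
  · have hfgmm' : f (p + (m + m')) = g (p + (m + m')) :=
      hshift _ (Nat.not_dvd_add_of_pos_of_lt hm hm' hmn hm'n hsum)
    calc f p = g (p + m + m') := by rw [← hfm, hfgm, hgm']
      _ = f (p + m' + m) := by rw [add_assoc, ← hfgmm', add_comm m m', ← add_assoc]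
      _ = g p := by rw [hfm, hfgm', hgm']

section repeatWord

variable {n : ℕ} (hn : 0 < n)

theorem repeatWord_periodic (v : Fin n → Bool) : Periodic (repeatWord hn v) n := fun k => by
  simp only [repeatWord, Nat.add_mod_right]

theorem repeatWord_of_lt (v : Fin n → Bool) {k : ℕ} (hk : k < n) :
    repeatWord hn v k = v ⟨k, hk⟩ := by
  simp only [repeatWord, Nat.mod_eq_of_lt hk]

theorem repeatWord_eq_off_modEq_last {v u : Fin n → Bool}
    (hsame : ∀ j : Fin n, (j : ℕ) + 1 < n → v j = u j) (k : ℕ) (hk : ¬ k ≡ n - 1 [MOD n]) :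
    repeatWord hn v k = repeatWord hn u k := by
  have hkn : k % n ≠ n - 1 := by
    rwa [Nat.ModEq, Nat.mod_eq_of_lt (Nat.sub_lt hn one_pos)] at hk
  exact hsame _ (by have := Nat.mod_lt k hn; simp only; omega)

theorem eq_of_repeatWord_last_eq {v u : Fin n → Bool}
    (hsame : ∀ j : Fin n, (j : ℕ) + 1 < n → v j = u j)
    (hlast : repeatWord hn v (n - 1) = repeatWord hn u (n - 1)) : v = u := by
  funext j
  by_cases hj : (j : ℕ) + 1 < n
  · exact hsame j hj
  · have hlt : n - 1 < n := Nat.sub_lt hn one_pos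
    have hjlast : j = ⟨n - 1, hlt⟩ := Fin.ext (show (j : ℕ) = n - 1 by omega)
    rwa [repeatWord_of_lt hn v hlt, repeatWord_of_lt hn u hlt, ← hjlast] at hlast

end repeatWord

theorem tail_choice (n : ℕ) (hn : 0 < n) (v u : Fin n → Bool)
    (hne : v ≠ u)
    (hsame : ∀ j : Fin n, (j : ℕ) + 1 < n → v j = u j) :
    (∀ m : ℕ, 0 < m → m < n → ∃ k, repeatWord hn v (k + m) ≠ repeatWord hn v k) ∨
    (∀ m : ℕ, 0 < m → m < n → ∃ k, repeatWord hn u (k + m) ≠ repeatWord hn u k) := by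
  by_contra! hboth
  obtain ⟨⟨m, hm, hmn, hvm⟩, ⟨m', hm', hm'n, hum'⟩⟩ := hboth
  exact hne <| eq_of_repeatWord_last_eq hn hsame <|
    (repeatWord_periodic hn v).eq_of_eq_off_modEq hvm hum'
      (repeatWord_eq_off_modEq_last hn hsame) hm hmn hm' hm'n
end

section
/- Define ν : ℕ → ℤ by ν(n) = Σ_{r | n} μ(n/r)·2^r. Then for every n ∈ ℕ, ν(n) ≥ 2ⁿ − 2^{n/2 + 1}, where n/2 denotes the real number n/2 (so 2^{n/2+1} = 2·√(2ⁿ)). -/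
/-! Splitting off the term `r = n`, `ν(n) = 2ⁿ + Σ_{r ∣ n, r < n} μ(n/r) 2^r`. A proper divisor
of `n` is at most `n / 2` and `|μ| ≤ 1`, so the remaining sum is bounded in absolute value by the
geometric sum `Σ_{r ≤ n/2} 2^r < 2^(n/2 + 1)`. -/

open ArithmeticFunction in
/-- number of periodic points of minimal period `n` for a generic quadratic polynomial -/
noncomputable def nuPer (n : ℕ) : ℤ := ∑ r ∈ n.divisors, moebius (n / r) * 2 ^ r

open ArithmeticFunction Finset
open scoped ArithmeticFunction.Moebius

lemma Nat.le_div_two_of_mem_properDivisors {n r : ℕ} (h : r ∈ n.properDivisors) : r ≤ n / 2 := by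
  obtain ⟨⟨k, rfl⟩, hlt⟩ := Nat.mem_properDivisors.mp h
  have hk : 2 ≤ k := by
    by_contra! hk
    interval_cases k <;> simp at hlt
  rw [Nat.le_div_iff_mul_le two_pos]
  exact Nat.mul_le_mul_left r hk

lemma abs_sum_properDivisors_moebius_mul_two_pow_lt (n : ℕ) :
    |∑ r ∈ n.properDivisors, (μ (n / r) : ℤ) * 2 ^ r| < 2 ^ (n / 2 + 1) := by
  have hgeom : ∑ r ∈ n.properDivisors, 2 ^ r < 2 ^ (n / 2 + 1) :=
    Nat.geomSum_lt le_rfl fun r hr ↦ Nat.lt_succ_of_le (Nat.le_div_two_of_mem_properDivisors hr)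
  calc |∑ r ∈ n.properDivisors, (μ (n / r) : ℤ) * 2 ^ r|
      ≤ ∑ r ∈ n.properDivisors, |(μ (n / r) : ℤ) * 2 ^ r| := abs_sum_le_sum_abs _ _
    _ ≤ ∑ r ∈ n.properDivisors, (2 : ℤ) ^ r := by
        gcongr with r
        rw [abs_mul, abs_pow, abs_two]
        exact mul_le_of_le_one_left (by positivity) abs_moebius_le_one
    _ < 2 ^ (n / 2 + 1) := by exact_mod_cast hgeom

lemma nuPer_eq_two_pow_add_sum_properDivisors {n : ℕ} (hn : n ≠ 0) :
    nuPer n = 2 ^ n + ∑ r ∈ n.properDivisors, (μ (n / r) : ℤ) * 2 ^ r := by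
  rw [nuPer, ← Nat.cons_self_properDivisors hn, sum_cons, Nat.div_self (Nat.pos_of_ne_zero hn),
    moebius_apply_one, one_mul]

lemma abs_nuPer_sub_two_pow_lt (n : ℕ) : |nuPer n - 2 ^ n| < 2 ^ (n / 2 + 1) := by
  rcases eq_or_ne n 0 with rfl | hn
  · norm_num [nuPer]
  rw [nuPer_eq_two_pow_add_sum_properDivisors hn, add_sub_cancel_left]
  exact abs_sum_properDivisors_moebius_mul_two_pow_lt n

theorem nuPer_lower_bound_general (n : ℕ) :
    (nuPer n : ℝ) ≥ 2 ^ n - 2 ^ ((n : ℝ) / 2 + 1) := by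
  have hint : (2 : ℝ) ^ n - 2 ^ (n / 2 + 1) < nuPer n := by
    have := (abs_lt.mp (abs_nuPer_sub_two_pow_lt n)).1
    exact_mod_cast (by linarith : (2 : ℤ) ^ n - 2 ^ (n / 2 + 1) < nuPer n)
  have hexp : (2 : ℝ) ^ (n / 2 + 1) ≤ 2 ^ ((n : ℝ) / 2 + 1) := by
    rw [← Real.rpow_natCast]
    apply Real.rpow_le_rpow_of_exponent_le one_le_two
    push_cast
    linarith [Nat.cast_div_le (m := n) (n := 2) (α := ℝ)]
  linarith

theorem nuPer_lower_bound (n : ℕ) (hn : 0 < n) :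
    (nuPer n : ℝ) ≥ 2 ^ n - 2 ^ ((n : ℝ) / 2 + 1) :=
  nuPer_lower_bound_general n
end

section
/- Let ν : ℕ → ℤ be defined by ν(n) = Σ_{r | n} μ(n/r)·2^r and define M(n) = ν(n) − ν(n)/n − Σ_{n = r·p, p < n} ν(p)·φ(r) (note n | ν(n) so ν(n)/n is an integer). Then lim_{n → ∞} M(n)/2ⁿ = 1. -/
/-- degree in `c` of the polynomial `Sₙ(c,s)` counting critical points of period `n`
multipliers; `nuPer n / n` is integer division, which is exact since `n ∣ nuPer n`. -/
noncomputable def degSn (n : ℕ) : ℤ :=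
  nuPer n - nuPer n / (n : ℤ) - ∑ p ∈ n.divisors.filter (· < n), nuPer p * Nat.totient (n / p)

/-! In the Möbius sum `nuPer n`, the term `r = n` is `2 ^ n` and every other divisor satisfies
`r ≤ n / 2`, so `nuPer n = 2 ^ n + O(n 2 ^ (n / 2))`. Consequently `nuPer n / n = O(2 ^ n / n)`, and
the sum over proper divisors `p ≤ n / 2` is `O(n ^ 3 2 ^ (n / 2))`; both are `o(2 ^ n)`. -/

open ArithmeticFunction Filter Finset Topology

theorem Nat.le_half_of_dvd_of_lt {r n : ℕ} (hrn : r ∣ n) (hlt : r < n) : r ≤ n / 2 := by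
  obtain ⟨k, rfl⟩ := hrn
  have hk : 2 ≤ k := by
    by_contra! h
    interval_cases k <;> omega
  rw [Nat.le_div_iff_mul_le two_pos]
  exact Nat.mul_le_mul_left r hk

theorem abs_sum_moebius_mul_two_pow_le (s : Finset ℕ) (f : ℕ → ℕ) {k : ℕ}
    (hs : ∀ r ∈ s, r ≤ k) : |∑ r ∈ s, (moebius (f r) : ℤ) * 2 ^ r| ≤ #s * 2 ^ k := by
  refine (abs_sum_le_sum_abs _ _).trans ?_
  rw [← nsmul_eq_mul]
  refine sum_le_card_nsmul _ _ _ fun r hr => ?_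
  rw [abs_mul, abs_pow, abs_two]
  calc |(moebius (f r) : ℤ)| * 2 ^ r ≤ 1 * 2 ^ k :=
        mul_le_mul abs_moebius_le_one (pow_le_pow_right₀ one_le_two (hs r hr)) (by positivity)
          zero_le_one
    _ = 2 ^ k := one_mul _

theorem abs_nuPer_le (n : ℕ) : |nuPer n| ≤ n * 2 ^ n :=
  (abs_sum_moebius_mul_two_pow_le _ _ fun _ => Nat.divisor_le).trans <|
    mul_le_mul_of_nonneg_right (mod_cast n.card_divisors_le_self) (by positivity)

theorem abs_nuPer_sub_two_pow_le {n : ℕ} (hn : n ≠ 0) : |nuPer n - 2 ^ n| ≤ n * 2 ^ (n / 2) := by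
  have hsplit : nuPer n = 2 ^ n + ∑ r ∈ n.divisors.erase n, (moebius (n / r) : ℤ) * 2 ^ r := by
    rw [nuPer, ← add_sum_erase _ _ (Nat.mem_divisors_self n hn), Nat.div_self (by omega),
      moebius_apply_one, one_mul]
  rw [hsplit, add_sub_cancel_left]
  refine (abs_sum_moebius_mul_two_pow_le _ _ fun r hr => ?_).trans <|
    mul_le_mul_of_nonneg_right ?_ (by positivity)
  · exact Nat.le_half_of_dvd_of_lt (Nat.dvd_of_mem_divisors (mem_of_mem_erase hr))
      ((Nat.divisor_le (mem_of_mem_erase hr)).lt_of_ne (ne_of_mem_erase hr))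
  · exact mod_cast (card_erase_le).trans n.card_divisors_le_self

theorem abs_sum_nuPer_mul_totient_le (n : ℕ) :
    |∑ p ∈ n.divisors.filter (· < n), nuPer p * (Nat.totient (n / p) : ℤ)|
      ≤ n ^ 3 * 2 ^ (n / 2) := by
  have hterm : ∀ p ∈ n.divisors.filter (· < n),
      |nuPer p * (Nat.totient (n / p) : ℤ)| ≤ n ^ 2 * 2 ^ (n / 2) := by
    intro p hp
    obtain ⟨hpn, hlt⟩ := mem_filter.mp hp
    have hnu : |nuPer p| ≤ n * 2 ^ (n / 2) :=
      (abs_nuPer_le p).trans <| mul_le_mul (mod_cast hlt.le)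
        (pow_le_pow_right₀ one_le_two (Nat.le_half_of_dvd_of_lt (Nat.dvd_of_mem_divisors hpn) hlt))
        (by positivity) (by positivity)
    have hphi : |(Nat.totient (n / p) : ℤ)| ≤ n := by
      rw [Nat.abs_cast]
      exact mod_cast (Nat.totient_le _).trans (Nat.div_le_self n p)
    calc |nuPer p * (Nat.totient (n / p) : ℤ)| ≤ n * 2 ^ (n / 2) * n := by
          rw [abs_mul]; exact mul_le_mul hnu hphi (abs_nonneg _) (by positivity)
      _ = n ^ 2 * 2 ^ (n / 2) := by ring
  calc _ ≤ ∑ p ∈ n.divisors.filter (· < n), |nuPer p * (Nat.totient (n / p) : ℤ)| :=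
        abs_sum_le_sum_abs _ _
    _ ≤ #(n.divisors.filter (· < n)) • ((n : ℤ) ^ 2 * 2 ^ (n / 2)) := sum_le_card_nsmul _ _ _ hterm
    _ ≤ n • ((n : ℤ) ^ 2 * 2 ^ (n / 2)) :=
        nsmul_le_nsmul_left (by positivity) ((card_filter_le _ _).trans n.card_divisors_le_self)
    _ = n ^ 3 * 2 ^ (n / 2) := by rw [nsmul_eq_mul]; ring

theorem abs_intCast_ediv_natCast_le (a : ℤ) (n : ℕ) :
    |((a / n : ℤ) : ℝ)| ≤ |(a : ℝ)| / n + 1 := by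
  have hfloor : ((a / n : ℤ) : ℝ) = ⌊(a : ℝ) / n⌋ := by
    rw [← Rat.floor_intCast_div_natCast, ← Rat.floor_cast (α := ℝ)]
    push_cast
    rfl
  rw [hfloor, show |(a : ℝ)| / n = |(a : ℝ) / n| by rw [abs_div, Nat.abs_cast]]
  set x := (a : ℝ) / n
  exact abs_le.mpr ⟨by linarith [Int.sub_one_lt_floor x, neg_abs_le x],
    by linarith [Int.floor_le x, le_abs_self x]⟩

theorem two_pow_half_le_sqrt_two_pow (n : ℕ) : (2 : ℝ) ^ (n / 2) ≤ √2 ^ n := by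
  calc (2 : ℝ) ^ (n / 2) = √2 ^ (2 * (n / 2)) := by rw [pow_mul, Real.sq_sqrt zero_le_two]
    _ ≤ √2 ^ n := pow_le_pow_right₀ Real.one_lt_sqrt_two.le (Nat.mul_div_le n 2)

theorem tendsto_pow_mul_two_pow_half_div_two_pow (k : ℕ) :
    Tendsto (fun n : ℕ => (n : ℝ) ^ k * 2 ^ (n / 2) / 2 ^ n) atTop (𝓝 0) := by
  refine squeeze_zero (fun n => by positivity) (fun n => ?_)
    (tendsto_pow_const_div_const_pow_of_one_lt k Real.one_lt_sqrt_two)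
  have hsq : (2 : ℝ) ^ n = √2 ^ n * √2 ^ n := by
    rw [← mul_pow, Real.mul_self_sqrt zero_le_two]
  rw [hsq, div_le_div_iff₀ (by positivity) (by positivity), mul_assoc]
  gcongr
  exact two_pow_half_le_sqrt_two_pow n

theorem tendsto_div_two_pow_zero_of_abs_le {u : ℕ → ℤ} (k : ℕ)
    (hu : ∀ᶠ n in atTop, |u n| ≤ n ^ k * 2 ^ (n / 2)) :
    Tendsto (fun n => (u n : ℝ) / 2 ^ n) atTop (𝓝 0) := by
  refine squeeze_zero_norm' ?_ (tendsto_pow_mul_two_pow_half_div_two_pow k)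
  filter_upwards [hu] with n hn
  rw [norm_div, norm_pow, Real.norm_two, Real.norm_eq_abs]
  gcongr
  exact_mod_cast hn

theorem tendsto_nuPer_div_two_pow : Tendsto (fun n => (nuPer n : ℝ) / 2 ^ n) atTop (𝓝 1) := by
  have herr := tendsto_div_two_pow_zero_of_abs_le 1 <|
    (eventually_ne_atTop 0).mono fun n hn => by simpa using abs_nuPer_sub_two_pow_le hn
  simpa [sub_div] using herr.add_const 1

theorem tendsto_ediv_self_div_two_pow {x : ℕ → ℤ} {L : ℝ}
    (hx : Tendsto (fun n => (x n : ℝ) / 2 ^ n) atTop (𝓝 L)) :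
    Tendsto (fun n => ((x n / n : ℤ) : ℝ) / 2 ^ n) atTop (𝓝 0) := by
  have hbound : Tendsto (fun n : ℕ => |(x n : ℝ) / 2 ^ n| * (n : ℝ)⁻¹ + ((2 : ℝ) ^ n)⁻¹)
      atTop (𝓝 0) := by
    simpa using (hx.abs.mul tendsto_inv_atTop_nhds_zero_nat).add
      (tendsto_inv_atTop_zero.comp (tendsto_pow_atTop_atTop_of_one_lt one_lt_two))
  refine squeeze_zero_norm (fun n => ?_) hbound
  have h2n : (0 : ℝ) < 2 ^ n := by positivity
  calc ‖((x n / n : ℤ) : ℝ) / 2 ^ n‖ = |((x n / n : ℤ) : ℝ)| / 2 ^ n := by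
        rw [norm_div, Real.norm_eq_abs, Real.norm_eq_abs, abs_of_pos h2n]
    _ ≤ (|(x n : ℝ)| / n + 1) / 2 ^ n := by gcongr; exact abs_intCast_ediv_natCast_le _ _
    _ = |(x n : ℝ) / 2 ^ n| * (n : ℝ)⁻¹ + ((2 : ℝ) ^ n)⁻¹ := by
        rw [abs_div, abs_of_pos h2n]; ring

theorem degSn_div_two_pow_tendsto_one :
    Filter.Tendsto (fun n : ℕ => (degSn n : ℝ) / 2 ^ n) Filter.atTop (nhds 1) := by
  have hmain := tendsto_nuPer_div_two_pow
  have hquot := tendsto_ediv_self_div_two_pow hmain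
  have hsum := tendsto_div_two_pow_zero_of_abs_le 3 <| Eventually.of_forall
    abs_sum_nuPer_mul_totient_le
  simpa [degSn, sub_div] using (hmain.sub hquot).sub hsum
end
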